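/- arXiv:1309.1507 — 6 statements merged into one kernel-verified Lean document; each statement's English description precedes it below -/
import Mathlib

section
/- For a needle of length L thrown uniformly at random on a plane ruled with parallel lines spaced δ apart, with L < δ, the probability that the needle crosses a line equals 2L/(πδ). -/
open Real MeasureTheory intervalIntegral

/-!
For a fixed angle `θ` the needle crosses a line iff the distance `u ∈ [0, δ/2]` from its midpoint
to the nearest line is at most `L |cos θ| / 2`; since `L < δ` this threshold lies in `[0, δ/2]`,
so the inner integral is `L |cos θ| / 2`. Integrating over `θ` leaves `∫₀^{2π} |cos θ| dθ = 4`,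
which follows from the `π`-periodicity of `|cos|` and `∫_{-π/2}^{π/2} cos = 2`.
-/

lemma intervalIntegral_ite_le_one_zero {a b : ℝ} (hb : 0 ≤ b) (hba : b ≤ a) :
    ∫ u in (0:ℝ)..a, (if u ≤ b then (1:ℝ) else 0) = b := by
  have hind : (fun u : ℝ => if u ≤ b then (1:ℝ) else 0) = {u | u ≤ b}.indicator 1 := by
    ext u
    simp only [Set.indicator_apply, Set.mem_ofPred_eq, Pi.one_apply]
  rw [hind, integral_indicator ⟨hb, hba⟩]
  simp

lemma integral_crossing_indicator {δ c : ℝ} (hc : 0 ≤ c) (hcδ : c ≤ δ) :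
    ∫ u in (0:ℝ)..(δ / 2), (if 2 * min u (δ - u) ≤ c then (1:ℝ) else 0) = c / 2 := by
  have hnear : ∀ u ∈ Set.uIcc 0 (δ / 2),
      (if 2 * min u (δ - u) ≤ c then (1:ℝ) else 0) = if u ≤ c / 2 then 1 else 0 := by
    intro u hu
    rw [Set.uIcc_of_le (by linarith)] at hu
    have hmin : min u (δ - u) = u := min_eq_left (by linarith [hu.2])
    simp only [hmin, le_div_iff₀' (two_pos : (0:ℝ) < 2)]
  rw [integral_congr hnear, intervalIntegral_ite_le_one_zero (by linarith) (by linarith)]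

lemma periodic_abs_cos : Function.Periodic (fun x => |cos x|) π :=
  fun x => by simp only [cos_add_pi, abs_neg]

lemma integral_abs_cos_period (t : ℝ) : ∫ x in t..t + π, |cos x| = 2 := by
  rw [periodic_abs_cos.intervalIntegral_add_eq t (-(π / 2))]
  have hcos : ∀ x ∈ Set.uIcc (-(π / 2)) (-(π / 2) + π), |cos x| = cos x := by
    intro x hx
    rw [Set.uIcc_of_le (by linarith [pi_pos])] at hx
    exact abs_of_nonneg (cos_nonneg_of_mem_Icc ⟨hx.1, by linarith [hx.2]⟩)
  rw [integral_congr hcos, integral_cos, neg_add_eq_sub, sub_half, sin_neg, sin_pi_div_two]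
  norm_num

lemma integral_abs_cos_zero_two_pi : ∫ x in (0:ℝ)..(2 * π), |cos x| = 4 := by
  have hint : ∀ a b : ℝ, IntervalIntegrable (fun x => |cos x|) volume a b :=
    fun a b => (continuous_abs.comp continuous_cos).intervalIntegrable a b
  have h₁ : ∫ x in (0:ℝ)..π, |cos x| = 2 := by simpa using integral_abs_cos_period 0
  have h₂ : ∫ x in π..(2 * π), |cos x| = 2 := by
    simpa [← two_mul] using integral_abs_cos_period π
  rw [← integral_add_adjacent_intervals (hint 0 π) (hint π (2 * π)), h₁, h₂]
  norm_num

theorem buffon_short_needle_general (L δ : ℝ) (hL : 0 < L) (hLδ : L < δ) :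
    (1 / (π * δ)) *
      ∫ θ in (0:ℝ)..(2 * π),
        ∫ u in (0:ℝ)..(δ / 2),
          (if 2 * min u (δ - u) ≤ L * |Real.cos θ| then (1:ℝ) else 0)
    = 2 * L / (π * δ) := by
  have hinner : ∀ θ : ℝ,
      ∫ u in (0:ℝ)..(δ / 2), (if 2 * min u (δ - u) ≤ L * |cos θ| then (1:ℝ) else 0)
        = L / 2 * |cos θ| := by
    intro θ
    have hthreshold : L * |cos θ| ≤ δ := by
      nlinarith [abs_cos_le_one θ, abs_nonneg (cos θ)]
    rw [integral_crossing_indicator (by positivity) hthreshold]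
    ring
  simp only [hinner, intervalIntegral.integral_const_mul, integral_abs_cos_zero_two_pi]
  have hδ : δ ≠ 0 := by linarith
  field_simp
  ring

/-- Buffon's needle, short needle case: the probability that the needle crosses a line
equals `2L/(πδ)` when `L < δ`. -/
theorem buffon_short_needle (L δ : ℝ) (hL : 0 < L) (hδ : 0 < δ) (hLδ : L < δ) :
    (1 / (π * δ)) *
      ∫ θ in (0:ℝ)..(2 * π),
        ∫ u in (0:ℝ)..(δ / 2),
          (if 2 * min u (δ - u) ≤ L * |Real.cos θ| then (1:ℝ) else 0)
    = 2 * L / (π * δ) :=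
  buffon_short_needle_general L δ hL hLδ
end

section
/- For a needle of length L ≥ δ thrown uniformly at random on a plane with parallel lines spaced δ apart, the probability of at least one intersection equals (2/π)θ₁ + (2L/(πδ))(1 − sin θ₁), where θ₁ ∈ [0, π/2] satisfies cos θ₁ = δ/L. -/
open Real MeasureTheory intervalIntegral

/-- Buffon's needle, long needle case (`L ≥ δ`): the probability of at least one
intersection equals `(2/π)θ₁ + (2L/(πδ))(1 − sin θ₁)` where `cos θ₁ = δ/L`,
`θ₁ ∈ [0, π/2]`. -/
theorem buffon_long_needle (L δ θ₁ : ℝ) (hδ : 0 < δ) (hLδ : δ ≤ L)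
    (hθ₁ : θ₁ ∈ Set.Icc (0:ℝ) (π / 2)) (hcos : Real.cos θ₁ = δ / L) :
    (4 / (π * δ)) *
      ∫ θ in (0:ℝ)..(π / 2),
        ∫ _u in (0:ℝ)..((1 / 2) * min δ (L * Real.cos θ)), (1:ℝ)
    = (2 / π) * θ₁ + (2 * L / (π * δ)) * (1 - Real.sin θ₁) := by
  have hL : 0 < L := lt_of_lt_of_le hδ hLδ
  have hπ : (0:ℝ) < π := Real.pi_pos
  obtain ⟨h0, hpi2⟩ := hθ₁
  have hinner : ∀ θ : ℝ, (∫ _u in (0:ℝ)..((1 / 2) * min δ (L * Real.cos θ)), (1:ℝ))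
      = (1/2) * min δ (L * Real.cos θ) := by
    intro θ; simp
  simp_rw [hinner]
  have hcont : Continuous fun θ : ℝ => (1/2) * min δ (L * Real.cos θ) :=
    continuous_const.mul (continuous_const.min (continuous_const.mul Real.continuous_cos))
  have hsplit : (∫ θ in (0:ℝ)..(π/2), (1/2) * min δ (L * Real.cos θ))
      = (∫ θ in (0:ℝ)..θ₁, (1/2) * min δ (L * Real.cos θ))
        + ∫ θ in θ₁..(π/2), (1/2) * min δ (L * Real.cos θ) :=
    (integral_add_adjacent_intervals (hcont.intervalIntegrable _ _)
      (hcont.intervalIntegrable _ _)).symm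
  have h1 : (∫ θ in (0:ℝ)..θ₁, (1/2) * min δ (L * Real.cos θ)) = (1/2) * δ * θ₁ := by
    rw [integral_congr (g := fun _ => (1/2) * δ)]
    · simp; ring
    · intro θ hθ
      rw [Set.uIcc_of_le h0] at hθ
      have hθ0 : 0 ≤ θ := hθ.1
      have hθle : θ ≤ θ₁ := hθ.2
      have hc : Real.cos θ₁ ≤ Real.cos θ :=
        Real.cos_le_cos_of_nonneg_of_le_pi hθ0 (by linarith) hθle
      have hm : δ ≤ L * Real.cos θ := by
        rw [hcos] at hc
        have : L * (δ / L) ≤ L * Real.cos θ := by nlinarith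
        rwa [mul_div_cancel₀ _ (ne_of_gt hL)] at this
      simp [min_eq_left hm]
  have h2 : (∫ θ in θ₁..(π/2), (1/2) * min δ (L * Real.cos θ))
      = (1/2) * L * (1 - Real.sin θ₁) := by
    rw [integral_congr (g := fun θ => (1/2) * (L * Real.cos θ))]
    · rw [intervalIntegral.integral_const_mul, intervalIntegral.integral_const_mul,
        integral_cos, Real.sin_pi_div_two]
      ring
    · intro θ hθ
      rw [Set.uIcc_of_le hpi2] at hθ
      have hc : Real.cos θ ≤ Real.cos θ₁ :=
        Real.cos_le_cos_of_nonneg_of_le_pi h0 (by linarith [hθ.2]) hθ.1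
      have hm : L * Real.cos θ ≤ δ := by
        rw [hcos] at hc
        have : L * Real.cos θ ≤ L * (δ / L) := by nlinarith
        rwa [mul_div_cancel₀ _ (ne_of_gt hL)] at this
      simp [min_eq_right hm]
  rw [hsplit, h1, h2]
  field_simp
  ring
end

section
/- For any real a > 0 and integer p ≥ 1, |(p+2)(p+1)·Σ_{k=1}^∞ k^p (u − k/a)₊ − a^{p+1} u^{p+2}| ≤ (p+2)·a^p·u^{p+1} for every u ∈ [0,1]. -/
/-!
The summand `g t = t ^ p * (u - t / a)₊` increases on `[0, c]` and decreases on `[c, ∞)`, where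
`c = p a u / (p + 1)` is where the derivative of `t ^ p (u - t / a)` vanishes, and `g = 0` beyond
`a u`. For such a unimodal function, `∑_{k=1}^n g k` and `∫₀ⁿ g` differ by at most `g c`: on each
monotone stretch the difference telescopes, and the unit interval containing `c` costs at most one
value of `g`. Finally `∫₀^{au} g = a^{p+1} u^{p+2} / ((p+1)(p+2))` and
`g c = c ^ p u / (p + 1) ≤ a^p u^{p+1} / (p + 1)`.
-/

open Set Finset intervalIntegral

section SumIntegral

variable {f : ℝ → ℝ}

theorem MonotoneOn.sum_Ico_sub_integral_mem_Icc {m n : ℕ} (hmn : m ≤ n)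
    (hf : MonotoneOn f (Icc m n)) :
    ∑ i ∈ Finset.Ico m n, f ↑(i + 1) - ∫ x in m..n, f x ∈ Icc 0 (f n - f m) := by
  have htelescope := Finset.sum_Ico_sub (fun i : ℕ => f i) hmn
  rw [Finset.sum_sub_distrib] at htelescope
  have hlower := hf.sum_le_integral_Ico hmn
  have hupper := hf.integral_le_sum_Ico hmn
  constructor <;> linarith

theorem AntitoneOn.sum_Ico_sub_integral_mem_Icc {m n : ℕ} (hmn : m ≤ n)
    (hf : AntitoneOn f (Icc m n)) :
    ∑ i ∈ Finset.Ico m n, f ↑(i + 1) - ∫ x in m..n, f x ∈ Icc (f n - f m) 0 := by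
  have htelescope := Finset.sum_Ico_sub (fun i : ℕ => f i) hmn
  rw [Finset.sum_sub_distrib] at htelescope
  have hlower := hf.sum_le_integral_Ico hmn
  have hupper := hf.integral_le_sum_Ico hmn
  constructor <;> linarith

theorem MonotoneOn.intervalIntegrable_of_Icc {x y : ℝ} (hxy : x ≤ y)
    (hf : MonotoneOn f (Icc x y)) : IntervalIntegrable f MeasureTheory.volume x y :=
  (Set.uIcc_of_le hxy ▸ hf).intervalIntegrable

theorem AntitoneOn.intervalIntegrable_of_Icc {x y : ℝ} (hxy : x ≤ y)
    (hf : AntitoneOn f (Icc x y)) : IntervalIntegrable f MeasureTheory.volume x y :=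
  (Set.uIcc_of_le hxy ▸ hf).intervalIntegrable

theorem MonotoneOn.integral_mem_Icc {x y : ℝ} (hxy : x ≤ y) (hf : MonotoneOn f (Icc x y)) :
    ∫ t in x..y, f t ∈ Icc ((y - x) * f x) ((y - x) * f y) := by
  have hint := hf.intervalIntegrable_of_Icc hxy
  constructor
  · simpa using integral_mono_on hxy intervalIntegrable_const hint
      fun t ht => hf ⟨le_rfl, hxy⟩ ht ht.1
  · simpa using integral_mono_on hxy hint intervalIntegrable_const
      fun t ht => hf ht ⟨hxy, le_rfl⟩ ht.2

theorem AntitoneOn.integral_mem_Icc {x y : ℝ} (hxy : x ≤ y) (hf : AntitoneOn f (Icc x y)) :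
    ∫ t in x..y, f t ∈ Icc ((y - x) * f y) ((y - x) * f x) := by
  have hint := hf.intervalIntegrable_of_Icc hxy
  constructor
  · simpa using integral_mono_on hxy intervalIntegrable_const hint
      fun t ht => hf ht ⟨hxy, le_rfl⟩ ht.2
  · simpa using integral_mono_on hxy hint intervalIntegrable_const
      fun t ht => hf ⟨le_rfl, hxy⟩ ht ht.1

theorem integral_mem_Icc_of_monotoneOn_antitoneOn {x c y : ℝ} (hxc : x ≤ c) (hcy : c ≤ y)
    (hmono : MonotoneOn f (Icc x c)) (hanti : AntitoneOn f (Icc c y)) :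
    ∫ t in x..y, f t ∈ Icc ((c - x) * f x + (y - c) * f y) ((y - x) * f c) := by
  obtain ⟨hrise_lo, hrise_hi⟩ := hmono.integral_mem_Icc hxc
  obtain ⟨hfall_lo, hfall_hi⟩ := hanti.integral_mem_Icc hcy
  rw [← integral_add_adjacent_intervals (hmono.intervalIntegrable_of_Icc hxc)
    (hanti.intervalIntegrable_of_Icc hcy)]
  constructor <;> linarith

theorem sum_sub_integral_mem_Icc_of_unimodal {c : ℝ} {n : ℕ} (hc : c ∈ Ico 0 (n : ℝ))
    (hmono : MonotoneOn f (Icc 0 c)) (hanti : AntitoneOn f (Icc c n)) :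
    ∑ k ∈ range n, f ↑(k + 1) - ∫ x in (0 : ℝ)..n, f x ∈ Icc (f n - f c) (f c - f 0) := by
  set j := ⌊c⌋₊
  have hjc : (j : ℝ) ≤ c := Nat.floor_le hc.1
  have hcj : c < j + 1 := Nat.lt_floor_add_one c
  have hjn : j + 1 ≤ n := (Nat.floor_lt hc.1).2 hc.2
  have hjn' : (j : ℝ) + 1 ≤ n := by exact_mod_cast hjn
  have hmono_left : MonotoneOn f (Icc 0 j) := hmono.mono (Icc_subset_Icc_right hjc)
  have hmono_peak : MonotoneOn f (Icc j c) := hmono.mono (Icc_subset_Icc_left j.cast_nonneg)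
  have hanti_peak : AntitoneOn f (Icc c (j + 1)) := hanti.mono (Icc_subset_Icc_right hjn')
  have hanti_right : AntitoneOn f (Icc (j + 1) n) := hanti.mono (Icc_subset_Icc_left hcj.le)
  obtain ⟨hleft_lo, hleft_hi⟩ :=
    MonotoneOn.sum_Ico_sub_integral_mem_Icc (Nat.zero_le j) (by simpa using hmono_left)
  obtain ⟨hright_lo, hright_hi⟩ :=
    AntitoneOn.sum_Ico_sub_integral_mem_Icc hjn (by simpa using hanti_right)
  obtain ⟨hpeak_lo, hpeak_hi⟩ :=
    integral_mem_Icc_of_monotoneOn_antitoneOn hjc hcj.le hmono_peak hanti_peak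
  have hfj : f j ≤ f c := hmono ⟨j.cast_nonneg, hjc⟩ ⟨hc.1, le_rfl⟩ hjc
  have hfj1 : f (j + 1) ≤ f c := hanti ⟨le_rfl, hc.2.le⟩ ⟨hcj.le, hjn'⟩ hcj.le
  have hsum : ∑ k ∈ range n, f ↑(k + 1)
      = ∑ k ∈ Finset.Ico 0 j, f ↑(k + 1) + f (j + 1) + ∑ k ∈ Finset.Ico (j + 1) n, f ↑(k + 1) := by
    rw [range_eq_Ico, ← Finset.sum_Ico_consecutive _ (Nat.zero_le _) hjn,
      Finset.sum_Ico_succ_top (Nat.zero_le _), Nat.cast_add_one]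
  have hint : ∫ x in (0 : ℝ)..n, f x
      = (∫ x in (0 : ℝ)..j, f x) + (∫ x in (j : ℝ)..j + 1, f x) + ∫ x in (j + 1 : ℝ)..n, f x := by
    have hint_left := hmono_left.intervalIntegrable_of_Icc j.cast_nonneg
    have hint_peak := (hmono_peak.intervalIntegrable_of_Icc hjc).trans
      (hanti_peak.intervalIntegrable_of_Icc hcj.le)
    rw [integral_add_adjacent_intervals hint_left hint_peak, integral_add_adjacent_intervals
      (hint_left.trans hint_peak) (hanti_right.intervalIntegrable_of_Icc hjn')]
  simp only [Nat.cast_zero, Nat.cast_add, Nat.cast_one] at *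
  rw [hsum, hint]
  constructor
  · linarith
  -- with `θ = c - j ∈ [0, 1)`, the peak interval adds at most `θ (f (j + 1) - f j) ≤ f c - f j`
  · nlinarith [mul_le_mul_of_nonneg_left hfj (sub_nonneg.2 hcj.le),
      mul_le_mul_of_nonneg_left hfj1 (sub_nonneg.2 hjc)]

end SumIntegral

theorem natCast_mul_div_add_one_le {b : ℝ} (hb : 0 ≤ b) (p : ℕ) : p * b / (p + 1) ≤ b :=
  div_le_of_le_mul₀ (by positivity) hb (by nlinarith)

noncomputable def powMulPosPart (a u : ℝ) (p : ℕ) (t : ℝ) : ℝ := t ^ p * max (u - t / a) 0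

section PowMulPosPart

variable {a u : ℝ} (p : ℕ)

theorem hasDerivAt_pow_mul_sub_div (t : ℝ) :
    HasDerivAt (fun t => t ^ p * (u - t / a)) (p * t ^ (p - 1) * (u - t / a) - t ^ p / a) t := by
  refine ((hasDerivAt_pow p t).mul (((hasDerivAt_id t).div_const a).const_sub u)).congr_deriv ?_
  simp only [id]
  ring

theorem mul_deriv_pow_mul_sub_div (ha : a ≠ 0) (t : ℝ) :
    t * (p * t ^ (p - 1) * (u - t / a) - t ^ p / a)
      = t ^ p * ((p + 1) / a) * (p * (a * u) / (p + 1) - t) := by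
  have hpow : p * t ^ (p - 1) * t = p * t ^ p := by
    rcases p with _ | p
    · simp
    · rw [mul_assoc, ← pow_succ, Nat.add_sub_cancel]
  field_simp
  linear_combination (u * a - t) * hpow

theorem monotoneOn_pow_mul_sub_div (ha : 0 < a) :
    MonotoneOn (fun t => t ^ p * (u - t / a)) (Icc 0 (p * (a * u) / (p + 1))) := by
  refine monotoneOn_of_hasDerivWithinAt_nonneg (convex_Icc _ _) (by fun_prop)
    (fun t _ => (hasDerivAt_pow_mul_sub_div p t).hasDerivWithinAt) fun t ht => ?_
  rw [interior_Icc] at ht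
  refine nonneg_of_mul_nonneg_right ?_ ht.1
  rw [mul_deriv_pow_mul_sub_div p ha.ne']
  exact mul_nonneg (by have := ht.1.le; positivity) (sub_nonneg.2 ht.2.le)

theorem antitoneOn_pow_mul_sub_div (ha : 0 < a) (hu : 0 ≤ u) :
    AntitoneOn (fun t => t ^ p * (u - t / a)) (Ici (p * (a * u) / (p + 1))) := by
  refine antitoneOn_of_hasDerivWithinAt_nonpos (convex_Ici _) (by fun_prop)
    (fun t _ => (hasDerivAt_pow_mul_sub_div p t).hasDerivWithinAt) fun t ht => ?_
  rw [interior_Ici] at ht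
  have ht0 : 0 < t := lt_of_le_of_lt (by positivity) ht
  refine nonpos_of_mul_nonpos_right ?_ ht0
  rw [mul_deriv_pow_mul_sub_div p ha.ne']
  exact mul_nonpos_of_nonneg_of_nonpos (by have := ht0.le; positivity) (sub_nonpos.2 ht.le)

variable {p}

theorem powMulPosPart_eq_max {t : ℝ} (ht : 0 ≤ t) :
    powMulPosPart a u p t = max (t ^ p * (u - t / a)) 0 := by
  rw [powMulPosPart, mul_max_of_nonneg _ _ (pow_nonneg ht p), mul_zero]

theorem powMulPosPart_nonneg {t : ℝ} (ht : 0 ≤ t) : 0 ≤ powMulPosPart a u p t :=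
  mul_nonneg (pow_nonneg ht p) (le_max_right _ _)

theorem powMulPosPart_eq_zero_of_le (ha : 0 < a) {t : ℝ} (ht : a * u ≤ t) : powMulPosPart a u p t = 0 := by
  have : u - t / a ≤ 0 := by rw [sub_nonpos, le_div_iff₀ ha]; linarith
  rw [powMulPosPart, max_eq_right this, mul_zero]

theorem monotoneOn_powMulPosPart (ha : 0 < a) :
    MonotoneOn (powMulPosPart a u p) (Icc 0 (p * (a * u) / (p + 1))) :=
  ((monotone_id.max monotone_const).comp_monotoneOn (monotoneOn_pow_mul_sub_div p ha)).congr
    fun _ ht => (powMulPosPart_eq_max ht.1).symm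

theorem antitoneOn_powMulPosPart (ha : 0 < a) (hu : 0 ≤ u) :
    AntitoneOn (powMulPosPart a u p) (Ici (p * (a * u) / (p + 1))) :=
  ((monotone_id.max monotone_const).comp_antitoneOn (antitoneOn_pow_mul_sub_div p ha hu)).congr
    fun _ ht => (powMulPosPart_eq_max ((by positivity : (0 : ℝ) ≤ _).trans ht)).symm

theorem powMulPosPart_peak_le (ha : 0 < a) (hu : 0 ≤ u) :
    powMulPosPart a u p (p * (a * u) / (p + 1)) ≤ a ^ p * u ^ (p + 1) / (p + 1) := by
  set c : ℝ := p * (a * u) / (p + 1)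
  have hc : c ≤ a * u := natCast_mul_div_add_one_le (by positivity) p
  have hgap : u - c / a = u / (p + 1) := by simp only [c]; field_simp; ring
  calc powMulPosPart a u p c = c ^ p * (u / (p + 1)) := by
        rw [powMulPosPart, hgap, max_eq_left (by positivity)]
    _ ≤ (a * u) ^ p * (u / (p + 1)) := by gcongr
    _ = a ^ p * u ^ (p + 1) / (p + 1) := by ring

theorem integral_powMulPosPart (ha : 0 < a) (hu : 0 ≤ u) {x : ℝ} (hx : a * u ≤ x) :
    ∫ t in (0 : ℝ)..x, powMulPosPart a u p t = a ^ (p + 1) * u ^ (p + 2) / ((p + 1) * (p + 2)) := by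
  have hcont : Continuous (powMulPosPart a u p) := by unfold powMulPosPart; fun_prop
  have hb : 0 ≤ a * u := by positivity
  have hhump : ∫ t in (0 : ℝ)..a * u, powMulPosPart a u p t
      = ∫ t in (0 : ℝ)..a * u, (t ^ p * u - t ^ (p + 1) / a) := by
    refine integral_congr fun t ht => ?_
    rw [Set.uIcc_of_le hb] at ht
    have : 0 ≤ u - t / a := by rw [sub_nonneg, div_le_iff₀ ha]; linarith [ht.2]
    rw [powMulPosPart, max_eq_left this]
    ring
  have htail : ∫ t in a * u..x, powMulPosPart a u p t = 0 := by
    rw [← integral_zero (a := a * u) (b := x)]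
    refine integral_congr fun t ht => ?_
    rw [Set.uIcc_of_le hx] at ht
    exact powMulPosPart_eq_zero_of_le ha ht.1
  rw [← integral_add_adjacent_intervals (hcont.intervalIntegrable 0 (a * u))
    (hcont.intervalIntegrable _ _), hhump, htail, add_zero, integral_sub, integral_mul_const,
    integral_div, integral_pow, integral_pow]
  · field_simp
    push_cast
    ring
  all_goals exact Continuous.intervalIntegrable (by fun_prop) _ _

theorem abs_tsum_powMulPosPart_sub_le (ha : 0 < a) (hu : 0 ≤ u) :
    |∑' k : ℕ, powMulPosPart a u p (k + 1) - a ^ (p + 1) * u ^ (p + 2) / ((p + 1) * (p + 2))|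
      ≤ a ^ p * u ^ (p + 1) / (p + 1) := by
  set n := ⌊a * u⌋₊ + 1
  have hn : a * u < n := by simpa [n] using Nat.lt_floor_add_one (a * u)
  have hpeak : (p * (a * u) / (p + 1) : ℝ) ∈ Ico 0 (n : ℝ) :=
    ⟨by positivity, (natCast_mul_div_add_one_le (by positivity) p).trans_lt hn⟩
  have htsum : ∑' k : ℕ, powMulPosPart a u p (k + 1) = ∑ k ∈ range n, powMulPosPart a u p ↑(k + 1) := by
    rw [tsum_eq_sum (s := range n)]
    · simp only [Nat.cast_add_one]
    · intro k hk
      have hnk : (n : ℝ) ≤ k := by simpa using hk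
      exact powMulPosPart_eq_zero_of_le ha (by linarith)
  obtain ⟨hlo, hhi⟩ := sum_sub_integral_mem_Icc_of_unimodal hpeak (monotoneOn_powMulPosPart ha)
    ((antitoneOn_powMulPosPart ha hu).mono Icc_subset_Ici_self)
  rw [integral_powMulPosPart ha hu hn.le] at hlo hhi
  have hfn : powMulPosPart a u p n = 0 := powMulPosPart_eq_zero_of_le ha hn.le
  have hf0 : 0 ≤ powMulPosPart a u p 0 := powMulPosPart_nonneg le_rfl
  have hmax := powMulPosPart_peak_le (p := p) ha hu
  rw [htsum, abs_le]
  constructor <;> linarith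

end PowMulPosPart

theorem sum_power_pos_part_bound_general (a : ℝ) (ha : 0 < a) (p : ℕ)
    (u : ℝ) (hu : u ∈ Set.Icc (0:ℝ) 1) :
    |((p:ℝ) + 2) * ((p:ℝ) + 1) * (∑' k : ℕ, ((k:ℝ) + 1) ^ p * max (u - ((k:ℝ) + 1) / a) 0)
        - a ^ (p + 1) * u ^ (p + 2)|
      ≤ ((p:ℝ) + 2) * a ^ p * u ^ (p + 1) := by
  have hbound := abs_tsum_powMulPosPart_sub_le (p := p) ha hu.1
  simp only [powMulPosPart] at hbound
  set S := ∑' k : ℕ, ((k:ℝ) + 1) ^ p * max (u - ((k:ℝ) + 1) / a) 0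
  have hscale : ((p:ℝ) + 2) * ((p:ℝ) + 1) * S - a ^ (p + 1) * u ^ (p + 2)
      = ((p + 2) * (p + 1)) * (S - a ^ (p + 1) * u ^ (p + 2) / ((p + 1) * (p + 2))) := by
    field_simp
  calc _ = ((p + 2) * (p + 1)) * |S - a ^ (p + 1) * u ^ (p + 2) / ((p + 1) * (p + 2))| := by
        rw [hscale, abs_mul, abs_of_pos (by positivity)]
    _ ≤ ((p + 2) * (p + 1)) * (a ^ p * u ^ (p + 1) / (p + 1)) := by gcongr
    _ = ((p:ℝ) + 2) * a ^ p * u ^ (p + 1) := by field_simp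

/-- For any real `a > 0`, integer `p ≥ 1` and `u ∈ [0,1]`,
`|(p+2)(p+1) Σ_{k=1}^∞ k^p (u − k/a)₊ − a^{p+1} u^{p+2}| ≤ (p+2) a^p u^{p+1}`. -/
theorem sum_power_pos_part_bound (a : ℝ) (ha : 0 < a) (p : ℕ) (hp : 1 ≤ p)
    (u : ℝ) (hu : u ∈ Set.Icc (0:ℝ) 1) :
    |((p:ℝ) + 2) * ((p:ℝ) + 1) * (∑' k : ℕ, ((k:ℝ) + 1) ^ p * max (u - ((k:ℝ) + 1) / a) 0)
        - a ^ (p + 1) * u ^ (p + 2)|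
      ≤ ((p:ℝ) + 2) * a ^ p * u ^ (p + 1) :=
  sum_power_pos_part_bound_general a ha p u hu
end

section
/- For every integer p ≥ 1, Γ((p+1)/2) ≤ 2^{(1−p)/2}·√π·√(p!). -/
open Real

lemma gamma_midpoint_sq_le {s t : ℝ} (hs : 0 < s) (ht : 0 < t) :
    Real.Gamma ((s + t) / 2) ^ 2 ≤ Real.Gamma s * Real.Gamma t := by
  have h := Real.convexOn_log_Gamma.2 (Set.mem_Ioi.2 hs) (Set.mem_Ioi.2 ht)
    (by norm_num : (0:ℝ) ≤ 1/2) (by norm_num : (0:ℝ) ≤ 1/2) (by norm_num)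
  simp only [Function.comp, smul_eq_mul] at h
  have hmid : (1/2 : ℝ) * s + (1/2 : ℝ) * t = (s + t) / 2 := by ring
  rw [hmid] at h
  have hGs : 0 < Real.Gamma s := Real.Gamma_pos_of_pos hs
  have hGt : 0 < Real.Gamma t := Real.Gamma_pos_of_pos ht
  have hGm : 0 < Real.Gamma ((s + t) / 2) := Real.Gamma_pos_of_pos (by linarith)
  have h2 := Real.exp_le_exp.2 (mul_le_mul_of_nonneg_left h (by norm_num : (0:ℝ) ≤ 2))
  calc Real.Gamma ((s+t)/2) ^ 2
      = Real.exp (2 * Real.log (Real.Gamma ((s+t)/2))) := by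
        rw [mul_comm, Real.exp_mul, Real.exp_log hGm]; norm_num
    _ ≤ Real.exp (2 * (1/2 * Real.log (Real.Gamma s) + 1/2 * Real.log (Real.Gamma t))) := h2
    _ = Real.Gamma s * Real.Gamma t := by
        rw [show 2 * (1/2 * Real.log (Real.Gamma s) + 1/2 * Real.log (Real.Gamma t))
            = Real.log (Real.Gamma s) + Real.log (Real.Gamma t) by ring,
          Real.exp_add, Real.exp_log hGs, Real.exp_log hGt]

/-- For every integer `p ≥ 1`, `Γ((p+1)/2) ≤ 2^{(1−p)/2} √π √(p!)`. -/
theorem gamma_factorial_bound (p : ℕ) (hp : 1 ≤ p) :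
    Real.Gamma (((p:ℝ) + 1) / 2)
      ≤ (2:ℝ) ^ ((1 - (p:ℝ)) / 2) * Real.sqrt π * Real.sqrt (Nat.factorial p) := by
  set x : ℝ := ((p:ℝ) + 1) / 2 with hxdef
  have hp1 : (1:ℝ) ≤ (p:ℝ) := by exact_mod_cast hp
  have hx1 : (1:ℝ) ≤ x := by rw [hxdef]; linarith
  have hx : 0 < x := by linarith
  have hy : 0 < x + 1/2 := by linarith
  have hG : 0 < Real.Gamma x := Real.Gamma_pos_of_pos hx
  have hG2 : 0 < Real.Gamma (x + 1/2) := Real.Gamma_pos_of_pos hy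
  set C : ℝ := (Nat.factorial p : ℝ) * 2 ^ (-(p:ℝ)) * Real.sqrt π with hCdef
  have hC : Real.Gamma x * Real.Gamma (x + 1/2) = C := by
    have := Real.Gamma_mul_Gamma_add_half x
    rw [show 2 * x = (p:ℝ) + 1 by rw [hxdef]; ring,
      show (1 : ℝ) - ((p:ℝ) + 1) = -(p:ℝ) by ring] at this
    rw [this, hCdef, Real.Gamma_nat_eq_factorial]
  have hCpos : 0 < C := by rw [← hC]; positivity
  -- Wendel-type inequality via log-convexity
  have hA : Real.Gamma (x + 1) ^ 2 ≤ Real.Gamma (x + 1/2) * Real.Gamma (x + 3/2) := by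
    have := gamma_midpoint_sq_le (by linarith : (0:ℝ) < x + 1/2) (by linarith : (0:ℝ) < x + 3/2)
    rwa [show (x + 1/2 + (x + 3/2)) / 2 = x + 1 by ring] at this
  rw [Real.Gamma_add_one (ne_of_gt hx),
    show x + 3/2 = (x + 1/2) + 1 by ring,
    Real.Gamma_add_one (ne_of_gt hy)] at hA
  -- hA : (x * Γ x)^2 ≤ Γ(x+1/2) * ((x+1/2) * Γ(x+1/2))
  have hpi : (3:ℝ) < π := Real.pi_gt_three
  have hx2 : x + 1/2 ≤ 4 * π * x ^ 2 := by nlinarith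
  have h4 : Real.Gamma x ^ 4 ≤ 4 * π * C ^ 2 := by
    have h1 : x ^ 2 * Real.Gamma x ^ 4 ≤ (x + 1/2) * C ^ 2 := by
      have := mul_le_mul_of_nonneg_left hA (le_of_lt (pow_pos hG 2))
      calc x ^ 2 * Real.Gamma x ^ 4 = Real.Gamma x ^ 2 * (x * Real.Gamma x) ^ 2 := by ring
        _ ≤ Real.Gamma x ^ 2 * (Real.Gamma (x+1/2) * ((x+1/2) * Real.Gamma (x+1/2))) := this
        _ = (x + 1/2) * (Real.Gamma x * Real.Gamma (x+1/2)) ^ 2 := by ring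
        _ = (x + 1/2) * C ^ 2 := by rw [hC]
    nlinarith [pow_pos hG 4, sq_nonneg C, mul_le_mul_of_nonneg_right hx2 (sq_nonneg C)]
  have hkey : Real.Gamma x ^ 2 ≤ 2 ^ (1 - (p:ℝ)) * π * (Nat.factorial p : ℝ) := by
    have hR : 2 * Real.sqrt π * C = 2 ^ (1 - (p:ℝ)) * π * (Nat.factorial p : ℝ) := by
      rw [hCdef, Real.rpow_sub (by norm_num : (0:ℝ) < 2), Real.rpow_one, Real.rpow_neg (by norm_num)]
      rw [show 2 * Real.sqrt π * ((Nat.factorial p : ℝ) * ((2:ℝ)^(p:ℝ))⁻¹ * Real.sqrt π)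
          = Real.sqrt π * Real.sqrt π * (2 * ((2:ℝ)^(p:ℝ))⁻¹ * (Nat.factorial p : ℝ)) by ring,
        Real.mul_self_sqrt Real.pi_pos.le]
      ring
    rw [← hR]
    have h4' : Real.Gamma x ^ 4 ≤ (2 * Real.sqrt π * C) ^ 2 := by
      rw [show (2 * Real.sqrt π * C)^2 = 4 * (Real.sqrt π * Real.sqrt π) * C ^ 2 by ring,
        Real.mul_self_sqrt Real.pi_pos.le]
      exact h4
    calc Real.Gamma x ^ 2 = Real.sqrt ((Real.Gamma x ^ 2) ^ 2) := by
          rw [Real.sqrt_sq (sq_nonneg _)]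
      _ ≤ Real.sqrt ((2 * Real.sqrt π * C) ^ 2) := by
          apply Real.sqrt_le_sqrt; rw [show (Real.Gamma x ^ 2)^2 = Real.Gamma x ^ 4 by ring]; exact h4'
      _ = 2 * Real.sqrt π * C := Real.sqrt_sq (by positivity)
  calc Real.Gamma x = Real.sqrt (Real.Gamma x ^ 2) := (Real.sqrt_sq hG.le).symm
    _ ≤ Real.sqrt (2 ^ (1 - (p:ℝ)) * π * (Nat.factorial p : ℝ)) := Real.sqrt_le_sqrt hkey
    _ = (2:ℝ) ^ ((1 - (p:ℝ)) / 2) * Real.sqrt π * Real.sqrt (Nat.factorial p) := by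
        rw [Real.sqrt_mul (by positivity), Real.sqrt_mul (by positivity : (0:ℝ) ≤ 2 ^ (1-(p:ℝ)))]
        congr 1
        rw [Real.sqrt_eq_rpow, ← Real.rpow_mul (by norm_num : (0:ℝ) ≤ 2)]
        congr 1; ring
end

section
/- Let φ ~ N(0, I_N) be a standard Gaussian vector in ℝ^N, ξ ~ Uniform([0, δ]) independent of φ, and Q_δ(λ) = δ⌊λ/δ⌋ the uniform quantizer with bin width δ > 0. Then for any u, v ∈ ℝ^N, E|Q_δ(⟨φ,u⟩ + ξ) − Q_δ(⟨φ,v⟩ + ξ)| = √(2/π)·‖u − v‖₂. -/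
/-!
Averaging over the dither first: for `U` uniform on `[0, 1]`, `E ⌊x + U⌋ = x` because the
fractional part is `1`-periodic with mean `1/2`, so by monotonicity of `⌊·⌋`,
`E |⌊a + U⌋ - ⌊b + U⌋| = |a - b|`. Rescaling by `δ`, the average over the dither of
`|Q_δ(a + ξ) - Q_δ(b + ξ)|` is `|a - b|`, so the integrand becomes `|⟪φ, u - v⟫|`. Under the
standard Gaussian measure `⟪φ, w⟫ ~ N(0, ‖w‖²)`, whose absolute first moment is `√(2/π) ‖w‖`.
-/

open Real MeasureTheory ProbabilityTheory intervalIntegral Set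

lemma intervalIntegrable_floor (a b : ℝ) :
    IntervalIntegrable (fun t : ℝ => (⌊t⌋ : ℝ)) volume a b :=
  ((Int.cast_mono.comp Int.floor_mono).monotoneOn _).intervalIntegrable

lemma integral_fract_add_one (x : ℝ) : ∫ t in x..x + 1, Int.fract t = 1 / 2 := by
  rw [(Int.fract_periodic ℝ).intervalIntegral_add_eq x 0, zero_add, integral_of_le zero_le_one,
    integral_Ioc_eq_integral_Ioo,
    setIntegral_congr_fun measurableSet_Ioo fun t ht => Int.fract_eq_self.2 ⟨ht.1.le, ht.2⟩,
    ← integral_Ioc_eq_integral_Ioo, ← integral_of_le zero_le_one, integral_id]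
  norm_num

lemma integral_floor_add (x : ℝ) : ∫ u in (0 : ℝ)..1, (⌊x + u⌋ : ℝ) = x := by
  have h := integral_fract_add_one x
  unfold Int.fract at h
  rw [integral_sub intervalIntegrable_id (intervalIntegrable_floor _ _), integral_id] at h
  rw [integral_comp_add_left (fun t : ℝ => (⌊t⌋ : ℝ)), add_zero]
  linarith

lemma integral_abs_floor_add_sub_floor_add (a b : ℝ) :
    ∫ u in (0 : ℝ)..1, |(⌊a + u⌋ : ℝ) - ⌊b + u⌋| = |a - b| := by
  wlog hba : b ≤ a generalizing a b
  · simpa only [abs_sub_comm] using this b a (le_of_not_ge hba)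
  have hfloor (u : ℝ) : (⌊b + u⌋ : ℝ) ≤ ⌊a + u⌋ := Int.cast_mono (Int.floor_mono (by linarith))
  simp_rw [abs_of_nonneg (sub_nonneg.2 (hfloor _)), abs_of_nonneg (sub_nonneg.2 hba)]
  have hint (x : ℝ) : IntervalIntegrable (fun u : ℝ => (⌊x + u⌋ : ℝ)) volume 0 1 := by
    simpa using (intervalIntegrable_floor (x + 0) (x + 1)).comp_add_left x
  rw [integral_sub (hint a) (hint b), integral_floor_add, integral_floor_add]

/-- The paper's uniform quantizer `Q_δ`. -/
noncomputable def quantize (δ x : ℝ) : ℝ := δ * ⌊x / δ⌋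

lemma quantize_add_mul {δ : ℝ} (hδ : δ ≠ 0) (x u : ℝ) :
    quantize δ (x + δ * u) = δ * ⌊x / δ + u⌋ := by
  rw [quantize, add_div, mul_div_cancel_left₀ u hδ]

lemma integral_abs_quantize_add_sub_quantize_add {δ : ℝ} (hδ : 0 < δ) (a b : ℝ) :
    (1 / δ) * ∫ ξ in (0 : ℝ)..δ, |quantize δ (a + ξ) - quantize δ (b + ξ)| = |a - b| := by
  have h := smul_integral_comp_mul_left (fun ξ => |quantize δ (a + ξ) - quantize δ (b + ξ)|)
    δ (a := 0) (b := 1)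
  simp only [mul_zero, mul_one, quantize_add_mul hδ.ne', ← mul_sub, abs_mul, abs_of_pos hδ,
    smul_eq_mul, intervalIntegral.integral_const_mul, integral_abs_floor_add_sub_floor_add] at h
  rw [← h, ← sub_div, abs_div, abs_of_pos hδ]
  field_simp

lemma integral_Ioi_mul_exp_neg_sq_div_two : ∫ x in Ioi (0 : ℝ), x * exp (-x ^ 2 / 2) = 1 := by
  have h := integral_mul_cexp_neg_mul_sq (b := 1 / 2) (by norm_num)
  norm_num at h
  rw [← Complex.ofReal_inj, ← integral_complex_ofReal, Complex.ofReal_one, ← h]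
  congr with x
  push_cast
  ring_nf

lemma integral_abs_gaussianReal_zero_one : ∫ x, |x| ∂gaussianReal 0 1 = √(2 / π) := by
  have hpdf (x : ℝ) :
      gaussianPDFReal 0 1 x • |x| = (√(2 * π))⁻¹ * (|x| * exp (-|x| ^ 2 / 2)) := by
    simp only [gaussianPDFReal, NNReal.coe_one, mul_one, sub_zero, smul_eq_mul, sq_abs]
    ring
  rw [integral_gaussianReal_eq_integral_smul one_ne_zero]
  simp_rw [hpdf]
  rw [integral_comp_abs (f := fun x => (√(2 * π))⁻¹ * (x * exp (-x ^ 2 / 2))),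
    MeasureTheory.integral_const_mul, integral_Ioi_mul_exp_neg_sq_div_two,
    sqrt_div zero_le_two, sqrt_mul zero_le_two]
  field_simp
  rw [sq_sqrt zero_le_two]

lemma integral_abs_gaussianReal_zero (v : NNReal) :
    ∫ x, |x| ∂gaussianReal 0 v = √(2 / π) * √v := by
  have h : (gaussianReal 0 1).map (√v * ·) = gaussianReal 0 v := by
    rw [gaussianReal_map_const_mul, mul_zero, mul_one]
    congr
    exact sq_sqrt v.coe_nonneg
  rw [← h, integral_map (by fun_prop) (by fun_prop)]
  simp_rw [abs_mul, abs_of_nonneg (sqrt_nonneg _)]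
  rw [MeasureTheory.integral_const_mul, integral_abs_gaussianReal_zero_one, mul_comm]

lemma integral_abs_inner_stdGaussian {E : Type*} [NormedAddCommGroup E] [InnerProductSpace ℝ E]
    [FiniteDimensional ℝ E] [MeasurableSpace E] [BorelSpace E] (w : E) :
    ∫ x, |inner ℝ x w| ∂stdGaussian E = √(2 / π) * ‖w‖ := by
  have hmap := IsGaussian.map_eq_gaussianReal (μ := stdGaussian E) (innerSL ℝ w)
  rw [integral_strongDual_stdGaussian, variance_dual_stdGaussian, innerSL_apply_norm] at hmap
  calc ∫ x, |inner ℝ x w| ∂stdGaussian E = ∫ y, |y| ∂(stdGaussian E).map (innerSL ℝ w) := by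
        rw [integral_map (by fun_prop) (by fun_prop)]
        simp [real_inner_comm]
    _ = √(2 / π) * ‖w‖ := by
        rw [hmap, integral_abs_gaussianReal_zero]
        simp

theorem dithered_quantized_expectation_general (N : ℕ) (δ : ℝ) (hδ : 0 < δ)
    (u v : EuclideanSpace ℝ (Fin N)) :
    (∫ φ : EuclideanSpace ℝ (Fin N),
        (1 / δ) * ∫ ξ in (0:ℝ)..δ,
          |δ * ((⌊(inner ℝ φ u + ξ) / δ⌋ : ℤ) : ℝ) - δ * ((⌊(inner ℝ φ v + ξ) / δ⌋ : ℤ) : ℝ)|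
        ∂volume
        ∂(Measure.map (WithLp.toLp 2) (Measure.pi fun _ : Fin N => gaussianReal 0 1 :
            Measure ((_ : Fin N) → ℝ)) : Measure (EuclideanSpace ℝ (Fin N))))
      = Real.sqrt (2 / π) * ‖u - v‖ := by
  have hdither (φ : EuclideanSpace ℝ (Fin N)) :=
    integral_abs_quantize_add_sub_quantize_add hδ (inner ℝ φ u) (inner ℝ φ v)
  unfold quantize at hdither
  simp_rw [hdither, ← inner_sub_right, map_pi_eq_stdGaussian]
  exact integral_abs_inner_stdGaussian (u - v)

/-- Expected quantized difference with uniform dithering: for `φ` a standard Gaussian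
vector of `ℝ^N`, `ξ` uniform on `[0, δ]` independent of `φ`, and
`Q_δ(λ) = δ⌊λ/δ⌋`, we have
`E|Q_δ(⟨φ,u⟩ + ξ) − Q_δ(⟨φ,v⟩ + ξ)| = √(2/π) ‖u − v‖₂`. -/
theorem dithered_quantized_expectation (N : ℕ) (hN : 1 ≤ N) (δ : ℝ) (hδ : 0 < δ)
    (u v : EuclideanSpace ℝ (Fin N)) :
    (∫ φ : EuclideanSpace ℝ (Fin N),
        (1 / δ) * ∫ ξ in (0:ℝ)..δ,
          |δ * ((⌊(inner ℝ φ u + ξ) / δ⌋ : ℤ) : ℝ) - δ * ((⌊(inner ℝ φ v + ξ) / δ⌋ : ℤ) : ℝ)|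
        ∂volume
        ∂(Measure.map (WithLp.toLp 2) (Measure.pi fun _ : Fin N => gaussianReal 0 1 :
            Measure ((_ : Fin N) → ℝ)) : Measure (EuclideanSpace ℝ (Fin N))))
      = Real.sqrt (2 / π) * ‖u - v‖ :=
  dithered_quantized_expectation_general N δ hδ u v
end

section
/- For any fixed reals a, b and U uniform on [0,1], E|⌊a + U⌋ − ⌊b + U⌋| = |a − b|. -/
open MeasureTheory intervalIntegral

lemma floor_add_intervalIntegrable (a x y : ℝ) :
    IntervalIntegrable (fun u => ((⌊a + u⌋ : ℤ) : ℝ)) volume x y := by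
  have hm : Monotone (fun u => ((⌊a + u⌋ : ℤ) : ℝ)) := by
    intro u v huv
    have := Int.floor_mono (show a + u ≤ a + v by linarith)
    dsimp only
    exact_mod_cast this
  exact hm.intervalIntegrable

lemma floor_add_integral (a : ℝ) :
    ∫ u in (0:ℝ)..1, ((⌊a + u⌋ : ℤ) : ℝ) = a := by
  set f := Int.fract a with hf
  have hf0 : 0 ≤ f := Int.fract_nonneg a
  have hf1 : f < 1 := Int.fract_lt_one a
  have key : ∀ u : ℝ, ((⌊a + u⌋ : ℤ) : ℝ) = (⌊a⌋ : ℝ) + ((⌊f + u⌋ : ℤ) : ℝ) := by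
    intro u
    have ha : a + u = (f + u) + (⌊a⌋ : ℤ) := by
      have := Int.floor_add_fract a
      push_cast
      linarith
    rw [ha, Int.floor_add_intCast]
    push_cast
    ring
  simp_rw [key]
  have hintble : IntervalIntegrable (fun u => ((⌊f + u⌋ : ℤ) : ℝ)) volume (0:ℝ) 1 :=
    floor_add_intervalIntegrable f 0 1
  rw [intervalIntegral.integral_add (by simp : IntervalIntegrable _ volume (0:ℝ) 1) hintble]
  have h1 : ∫ u in (0:ℝ)..(1 - f), ((⌊f + u⌋ : ℤ) : ℝ) = 0 := by
    rw [intervalIntegral.integral_congr_ae (g := fun _ => (0:ℝ))]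
    · simp
    · have hne : ∀ᵐ u : ℝ ∂volume, u ≠ 1 - f := by
        rw [MeasureTheory.ae_iff]
        simpa using measure_singleton (1 - f : ℝ)
      filter_upwards [hne] with u hu hmem
      rw [Set.mem_uIoc] at hmem
      have h01 : 0 ≤ 1 - f := by linarith
      have hu1 : u < 1 - f := by
        rcases hmem with h | h
        · exact lt_of_le_of_ne h.2 hu
        · linarith [h.1, h.2]
      have hu0 : 0 < u := by
        rcases hmem with h | h
        · exact h.1
        · linarith [h.1, h.2]
      have : ⌊f + u⌋ = 0 := by
        rw [Int.floor_eq_zero_iff]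
        simp only [Set.mem_Ico]
        constructor <;> linarith
      simp [this]
  have h2 : ∫ u in (1 - f : ℝ)..1, ((⌊f + u⌋ : ℤ) : ℝ) = f := by
    rw [intervalIntegral.integral_congr (g := fun _ => (1:ℝ))]
    · simp
    · intro u hu
      rw [Set.uIcc_of_le (by linarith)] at hu
      have h1u : 1 ≤ f + u := by linarith [hu.1]
      have h2u : f + u < 2 := by linarith [hu.2]
      have : ⌊f + u⌋ = 1 := by
        apply Int.floor_eq_iff.2 <;> simp <;> constructor <;> linarith
      simp [this]
  have hsplit : ∫ u in (0:ℝ)..1, ((⌊f + u⌋ : ℤ) : ℝ)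
      = (∫ u in (0:ℝ)..(1 - f), ((⌊f + u⌋ : ℤ) : ℝ))
        + ∫ u in (1 - f : ℝ)..1, ((⌊f + u⌋ : ℤ) : ℝ) := by
    rw [intervalIntegral.integral_add_adjacent_intervals
      (floor_add_intervalIntegrable f 0 (1 - f)) (floor_add_intervalIntegrable f (1 - f) 1)]
  rw [hsplit, h1, h2]
  have := Int.floor_add_fract a
  simp only [intervalIntegral.integral_const, smul_eq_mul]
  push_cast
  nlinarith

/-- Dithering identity: for any fixed reals `a, b` and `U` uniform on `[0,1]`,
`E|⌊a + U⌋ − ⌊b + U⌋| = |a − b|`. -/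
theorem dithered_floor_expectation (a b : ℝ) :
    ∫ u in (0:ℝ)..1, |((⌊a + u⌋ : ℤ) : ℝ) - ((⌊b + u⌋ : ℤ) : ℝ)| = |a - b| := by
  wlog hab : b ≤ a generalizing a b with H
  · have := H b a (le_of_not_ge hab)
    rw [abs_sub_comm]
    simp_rw [abs_sub_comm (((⌊a + _⌋ : ℤ) : ℝ))]
    exact this
  have h : ∀ u : ℝ, |((⌊a + u⌋ : ℤ) : ℝ) - ((⌊b + u⌋ : ℤ) : ℝ)|
      = ((⌊a + u⌋ : ℤ) : ℝ) - ((⌊b + u⌋ : ℤ) : ℝ) := by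
    intro u
    apply abs_of_nonneg
    have := Int.floor_mono (show b + u ≤ a + u by linarith)
    have : ((⌊b + u⌋ : ℤ) : ℝ) ≤ ((⌊a + u⌋ : ℤ) : ℝ) := by exact_mod_cast this
    linarith
  simp_rw [h]
  rw [intervalIntegral.integral_sub (floor_add_intervalIntegrable a 0 1)
    (floor_add_intervalIntegrable b 0 1), floor_add_integral, floor_add_integral,
    abs_of_nonneg (by linarith)]
end
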